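/- Let $\hat{u}:\mathbb{R}^3\times\mathbb{R}\to\mathbb{R}$ be a smooth function satisfying the variable-coefficient wave equation $\hat{u}_{tt}=\operatorname{div}(G(x)\nabla\hat{u})+f$, where $G(x)$ is a smooth symmetric positive definite matrix field and $f$ is smooth. Let $\hat{H}$ be a smooth vector field on $\mathbb{R}^3$, let $g=G^{-1}$ be the Riemannian metric with covariant differential $D$, and set $\nabla_g\hat u = G(x)\nabla\hat u$, $|\nabla_g\hat u|_g^2=\langle G(x)\nabla\hat u,\nabla\hat u\rangle$, and $\hat H(\hat u)=\langle\hat H,\nabla\hat u\rangle$. Then the pointwise identity holds: $\operatorname{div}\{2\hat{H}(\hat{u})\,G(x)\nabla\hat{u}-(|\nabla_g\hat{u}|_g^2-\hat{u}_t^2)\hat{H}\}+2f\,\hat{H}(\hat{u}) = 2\,\partial_t[\hat{u}_t\,\hat{H}(\hat{u})]+2\,D\hat{H}(\nabla_g\hat{u},\nabla_g\hat{u})+(\hat{u}_t^2-|\nabla_g\hat{u}|_g^2)\operatorname{div}\hat{H}$. -/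

import Mathlib

open Matrix

noncomputable section

abbrev E3 := Fin 3 → ℝ

/-- Euclidean partial derivative `∂_i f` at `x`. -/
noncomputable def pd (i : Fin 3) (f : E3 → ℝ) (x : E3) : ℝ :=
  fderiv ℝ f x (Pi.single i 1)

/-- Euclidean gradient. -/
noncomputable def grad (f : E3 → ℝ) (x : E3) : E3 := fun i => pd i f x

/-- Euclidean divergence of a vector field. -/
noncomputable def divV (V : E3 → E3) (x : E3) : ℝ :=
  ∑ i : Fin 3, pd i (fun y => V y i) x

/-- Christoffel symbols `Γ^k_{jl}` of the Riemannian metric `g = G⁻¹`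
(whose inverse metric is `G`). -/
noncomputable def christoffel (G : E3 → Matrix (Fin 3) (Fin 3) ℝ)
    (k j l : Fin 3) (x : E3) : ℝ :=
  (1 / 2) * ∑ m : Fin 3, G x k m *
    (pd j (fun y => (G y)⁻¹ m l) x + pd l (fun y => (G y)⁻¹ m j) x
      - pd m (fun y => (G y)⁻¹ j l) x)

/-- Covariant differential `DH(X,Y) = ⟨∇_Y H, X⟩_g` of the vector field `H`
with respect to the Levi-Civita connection of the metric `g = G⁻¹`. -/
noncomputable def covDiff (G : E3 → Matrix (Fin 3) (Fin 3) ℝ)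
    (H : E3 → E3) (x : E3) (X Y : E3) : ℝ :=
  ∑ i : Fin 3, ∑ k : Fin 3, (G x)⁻¹ i k * X i *
    (∑ j : Fin 3, Y j *
      (pd j (fun y => H y k) x + ∑ l : Fin 3, christoffel G k j l x * H x l))

/-! ### Toolkit -/

theorem pd_mul {f g : E3 → ℝ} {x : E3} (i : Fin 3)
    (hf : DifferentiableAt ℝ f x) (hg : DifferentiableAt ℝ g x) :
    pd i (fun y => f y * g y) x = pd i f x * g x + f x * pd i g x := by
  simp [pd, fderiv_fun_mul hf hg]; ring

theorem pd_sum {ι : Type*} {s : Finset ι} {F : ι → E3 → ℝ} {x : E3} (i : Fin 3)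
    (h : ∀ j ∈ s, DifferentiableAt ℝ (F j) x) :
    pd i (fun y => ∑ j ∈ s, F j y) x = ∑ j ∈ s, pd i (F j) x := by
  simp [pd, fderiv_fun_sum h]

theorem pd_const (i : Fin 3) (x : E3) (c : ℝ) : pd i (fun _ => c) x = 0 := by
  simp [pd]

theorem pd_const_mul {f : E3 → ℝ} {x : E3} (i : Fin 3) (c : ℝ)
    (hf : DifferentiableAt ℝ f x) :
    pd i (fun y => c * f y) x = c * pd i f x := by
  rw [pd_mul i (differentiableAt_const c) hf, pd_const]; ring

theorem pd_sub {f g : E3 → ℝ} {x : E3} (i : Fin 3)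
    (hf : DifferentiableAt ℝ f x) (hg : DifferentiableAt ℝ g x) :
    pd i (fun y => f y - g y) x = pd i f x - pd i g x := by
  simp [pd, fderiv_fun_sub hf hg]

theorem pd_sq {f : E3 → ℝ} {x : E3} (i : Fin 3) (hf : DifferentiableAt ℝ f x) :
    pd i (fun y => f y ^ 2) x = 2 * f x * pd i f x := by
  have : (fun y => f y ^ 2) = fun y => f y * f y := by funext y; ring
  rw [this, pd_mul i hf hf]; ring

section Joint
variable {F : E3 × ℝ → ℝ} {x : E3} {t : ℝ}

theorem fderiv_fix_snd (hF : DifferentiableAt ℝ F (x, t)) (v : E3) :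
    fderiv ℝ (fun z => F (z, t)) x v = fderiv ℝ F (x, t) (v, 0) := by
  have h1 : HasFDerivAt (fun z : E3 => (z, t))
      ((ContinuousLinearMap.id ℝ E3).prod 0) x :=
    (hasFDerivAt_id x).prodMk (hasFDerivAt_const t x)
  have h2 := (hF.hasFDerivAt.comp x h1).fderiv
  rw [show (fun z : E3 => F (z, t)) = F ∘ (fun z : E3 => (z, t)) from rfl, h2]
  rfl

theorem fderiv_fix_fst (hF : DifferentiableAt ℝ F (x, t)) :
    deriv (fun r => F (x, r)) t = fderiv ℝ F (x, t) (0, 1) := by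
  have h1 : HasFDerivAt (fun r : ℝ => (x, r))
      ((0 : ℝ →L[ℝ] E3).prod (ContinuousLinearMap.id ℝ ℝ)) t :=
    (hasFDerivAt_const x t).prodMk (hasFDerivAt_id t)
  have h2 := (hF.hasFDerivAt.comp t h1).fderiv
  rw [← fderiv_apply_one_eq_deriv, show (fun r : ℝ => F (x, r)) = F ∘ (fun r : ℝ => (x, r)) from rfl, h2]
  rfl

theorem contDiff_fderiv_apply (hF : ContDiff ℝ (⊤ : ℕ∞) F) (w : E3 × ℝ) :
    ContDiff ℝ (⊤ : ℕ∞) (fun z => fderiv ℝ F z w) :=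
  (hF.fderiv_right (by simp)).clm_apply contDiff_const

theorem schwarz (hF : ContDiff ℝ (⊤ : ℕ∞) F) (z₀ v w : E3 × ℝ) :
    fderiv ℝ (fun z => fderiv ℝ F z w) z₀ v = fderiv ℝ (fun z => fderiv ℝ F z v) z₀ w := by
  have hd : DifferentiableAt ℝ (fderiv ℝ F) z₀ :=
    ((hF.fderiv_right (m := (⊤ : ℕ∞)) (by simp)).differentiable (by simp)).differentiableAt
  have e : ∀ a : E3 × ℝ, fderiv ℝ (fun z => fderiv ℝ F z a) z₀ =
      (fderiv ℝ (fderiv ℝ F) z₀).flip a := by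
    intro a
    rw [fderiv_clm_apply hd (differentiableAt_const a)]
    simp
  rw [e w, e v, ContinuousLinearMap.flip_apply, ContinuousLinearMap.flip_apply]
  exact (hF.contDiffAt (x := z₀)).isSymmSndFDerivAt (by rw [minSmoothness_of_isRCLikeNormedField]; exact (WithTop.coe_le_coe.mpr (le_top : (2 : ℕ∞) ≤ ⊤))) v w

end Joint

/-! ### Inverse matrix entries -/

theorem ginv_contDiff (G : E3 → Matrix (Fin 3) (Fin 3) ℝ)
    (hGsmooth : ∀ i j : Fin 3, ContDiff ℝ (⊤ : ℕ∞) (fun x => G x i j))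
    (hGpos : ∀ x, (G x).PosDef) (m l : Fin 3) :
    ContDiff ℝ (⊤ : ℕ∞) (fun y => (G y)⁻¹ m l) := by
  have hdet : ContDiff ℝ (⊤ : ℕ∞) (fun y => (G y).det) := by
    simp only [Matrix.det_fin_three]
    fun_prop
  have hdetne : ∀ y, (G y).det ≠ 0 := fun y => (hGpos y).det_pos.ne'
  have h1 : (fun y => (G y)⁻¹ m l) =
      fun y => ((G y).det)⁻¹ * (G y).adjugate m l := by
    funext y
    rw [Matrix.inv_def]
    simp [Ring.inverse_eq_inv']
  rw [h1]
  apply ContDiff.mul (hdet.inv hdetne)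
  fin_cases m <;> fin_cases l <;> simp [Matrix.adjugate_fin_three] <;> fun_prop

theorem pd_inv (G : E3 → Matrix (Fin 3) (Fin 3) ℝ)
    (hGsmooth : ∀ i j : Fin 3, ContDiff ℝ (⊤ : ℕ∞) (fun x => G x i j))
    (hGpos : ∀ x, (G x).PosDef) (x : E3) (j m l : Fin 3) :
    pd j (fun y => (G y)⁻¹ m l) x =
      -∑ a : Fin 3, ∑ b : Fin 3,
        (G x)⁻¹ m a * pd j (fun y => G y a b) x * (G x)⁻¹ b l := by
  have hunit : ∀ y, IsUnit (G y).det := fun y =>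
    isUnit_iff_ne_zero.mpr (hGpos y).det_pos.ne'
  have hdG : ∀ (a b : Fin 3), DifferentiableAt ℝ (fun y => G y a b) x := fun a b =>
    ((hGsmooth a b).differentiable (by simp)).differentiableAt
  have hdg : ∀ (a b : Fin 3), DifferentiableAt ℝ (fun y => (G y)⁻¹ a b) x := fun a b =>
    (((ginv_contDiff G hGsmooth hGpos a b)).differentiable (by simp)).differentiableAt
  have hb : ∀ b : Fin 3,
      ∑ a : Fin 3, (pd j (fun y => (G y)⁻¹ m a) x * G x a b
        + (G x)⁻¹ m a * pd j (fun y => G y a b) x) = 0 := by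
    intro b
    have e1 : (fun y => ∑ a : Fin 3, (G y)⁻¹ m a * G y a b) =
        fun _ => (1 : Matrix (Fin 3) (Fin 3) ℝ) m b := by
      funext y
      rw [← Matrix.mul_apply, Matrix.nonsing_inv_mul (G y) (hunit y)]
    have e2 : pd j (fun y => ∑ a : Fin 3, (G y)⁻¹ m a * G y a b) x = 0 := by
      rw [e1]; simp [pd]
    rw [pd_sum j (fun a _ => ((hdg m a).fun_mul (hdG a b)))] at e2
    rw [← e2]
    exact Finset.sum_congr rfl fun a _ => (pd_mul j (hdg m a) (hdG a b)).symm
  have ka : ∀ a : Fin 3, ∑ b : Fin 3, G x a b * (G x)⁻¹ b l =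
      (1 : Matrix (Fin 3) (Fin 3) ℝ) a l := by
    intro a
    rw [← Matrix.mul_apply, Matrix.mul_nonsing_inv (G x) (hunit x)]
  calc pd j (fun y => (G y)⁻¹ m l) x
      = ∑ a : Fin 3, pd j (fun y => (G y)⁻¹ m a) x
          * (1 : Matrix (Fin 3) (Fin 3) ℝ) a l := by
        simp [Matrix.one_apply]
    _ = ∑ a : Fin 3, ∑ b : Fin 3,
          pd j (fun y => (G y)⁻¹ m a) x * G x a b * (G x)⁻¹ b l := by
        refine Finset.sum_congr rfl fun a _ => ?_
        rw [← ka a, Finset.mul_sum]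
        exact Finset.sum_congr rfl fun b _ => by ring
    _ = ∑ b : Fin 3, (∑ a : Fin 3,
          pd j (fun y => (G y)⁻¹ m a) x * G x a b) * (G x)⁻¹ b l := by
        rw [Finset.sum_comm]
        exact Finset.sum_congr rfl fun b _ => by rw [Finset.sum_mul]
    _ = ∑ b : Fin 3, (-(∑ a : Fin 3,
          (G x)⁻¹ m a * pd j (fun y => G y a b) x)) * (G x)⁻¹ b l := by
        refine Finset.sum_congr rfl fun b _ => ?_
        congr 1
        have := hb b
        rw [Finset.sum_add_distrib] at this
        linarith
    _ = -∑ a : Fin 3, ∑ b : Fin 3,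
          (G x)⁻¹ m a * pd j (fun y => G y a b) x * (G x)⁻¹ b l := by
        simp only [Fin.sum_univ_three]
        ring

/-! ### Reduction of the covariant differential term -/

theorem covDiff_eq (G : E3 → Matrix (Fin 3) (Fin 3) ℝ)
    (hGsmooth : ∀ i j : Fin 3, ContDiff ℝ (⊤ : ℕ∞) (fun x => G x i j))
    (hGsymm : ∀ x, (G x).IsSymm) (hGpos : ∀ x, (G x).PosDef)
    (H : E3 → E3) (x : E3) (a : E3) :
    covDiff G H x ((G x).mulVec a) ((G x).mulVec a) =
      (∑ k : Fin 3, ∑ j : Fin 3,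
          a k * (G x).mulVec a j * pd j (fun y => H y k) x)
        - (1 / 2) * ∑ l : Fin 3, ∑ c : Fin 3, ∑ b : Fin 3,
            H x l * (a c * pd l (fun y => G y c b) x * a b) := by
  have hunit : ∀ y, IsUnit (G y).det := fun y =>
    isUnit_iff_ne_zero.mpr (hGpos y).det_pos.ne'
  set p : E3 := (G x).mulVec a with hp
  have hpdef : ∀ i, p i = ∑ j : Fin 3, G x i j * a j := by
    intro i; simp [hp, Matrix.mulVec, dotProduct]
  have hgsymm : ((G x)⁻¹).IsSymm := by
    rw [Matrix.IsSymm, Matrix.transpose_nonsing_inv, (hGsymm x).eq]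
  have h1 : (G x)⁻¹.mulVec p = a := by
    rw [hp, Matrix.mulVec_mulVec, Matrix.nonsing_inv_mul _ (hunit x),
      Matrix.one_mulVec]
  have L1 : ∀ k, ∑ i : Fin 3, (G x)⁻¹ i k * p i = a k := by
    intro k
    calc ∑ i : Fin 3, (G x)⁻¹ i k * p i
        = ∑ i : Fin 3, (G x)⁻¹ k i * p i :=
          Finset.sum_congr rfl fun i _ => by rw [hgsymm.apply]
      _ = ((G x)⁻¹.mulVec p) k := by simp [Matrix.mulVec, dotProduct]
      _ = a k := by rw [h1]
  have L1a : ∀ c, ∑ m : Fin 3, p m * (G x)⁻¹ m c = a c := by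
    intro c
    rw [← L1 c]
    exact Finset.sum_congr rfl fun m _ => by ring
  have L1b : ∀ b, ∑ j : Fin 3, (G x)⁻¹ b j * p j = a b := by
    intro b
    rw [← L1 b]
    exact Finset.sum_congr rfl fun j _ => by rw [hgsymm.apply]
  have L2 : ∀ m, ∑ k : Fin 3, a k * G x k m = p m := by
    intro m
    rw [hpdef m]
    exact Finset.sum_congr rfl fun k _ => by rw [(hGsymm x).apply]; ring
  have hD := pd_inv G hGsmooth hGpos x
  have step4 : ∀ l : Fin 3,
      ∑ j : Fin 3, p j * (∑ m : Fin 3, p m *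
        (pd j (fun y => (G y)⁻¹ m l) x + pd l (fun y => (G y)⁻¹ m j) x
          - pd m (fun y => (G y)⁻¹ j l) x)) =
      -∑ c : Fin 3, ∑ b : Fin 3, a c * pd l (fun y => G y c b) x * a b := by
    intro l
    have e : (∑ c : Fin 3, ∑ b : Fin 3, a c * pd l (fun y => G y c b) x * a b)
        = ∑ c : Fin 3, ∑ b : Fin 3,
            (∑ m : Fin 3, p m * (G x)⁻¹ m c) * pd l (fun y => G y c b) x
              * (∑ j : Fin 3, (G x)⁻¹ b j * p j) := by
      refine Finset.sum_congr rfl fun c _ => Finset.sum_congr rfl fun b _ => ?_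
      rw [L1a, L1b]
    rw [e]
    simp only [hD, Fin.sum_univ_three]
    ring
  calc covDiff G H x p p
      = ∑ k : Fin 3, a k * (∑ j : Fin 3, p j *
          (pd j (fun y => H y k) x
            + ∑ l : Fin 3, christoffel G k j l x * H x l)) := by
        simp only [covDiff]
        rw [Finset.sum_comm]
        refine Finset.sum_congr rfl fun k _ => ?_
        rw [← Finset.sum_mul, L1 k]
    _ = (∑ k : Fin 3, ∑ j : Fin 3, a k * p j * pd j (fun y => H y k) x)
        + ∑ j : Fin 3, ∑ l : Fin 3, (p j * H x l) * ((1 / 2) *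
            ∑ m : Fin 3, (∑ k : Fin 3, a k * G x k m) *
              (pd j (fun y => (G y)⁻¹ m l) x + pd l (fun y => (G y)⁻¹ m j) x
                - pd m (fun y => (G y)⁻¹ j l) x)) := by
        simp only [christoffel, Fin.sum_univ_three]
        ring
    _ = (∑ k : Fin 3, ∑ j : Fin 3, a k * p j * pd j (fun y => H y k) x)
        + ∑ j : Fin 3, ∑ l : Fin 3, (p j * H x l) * ((1 / 2) *
            ∑ m : Fin 3, p m *
              (pd j (fun y => (G y)⁻¹ m l) x + pd l (fun y => (G y)⁻¹ m j) x
                - pd m (fun y => (G y)⁻¹ j l) x)) := by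
        congr 1
        refine Finset.sum_congr rfl fun j _ => Finset.sum_congr rfl fun l _ => ?_
        congr 2
        exact Finset.sum_congr rfl fun m _ => by rw [L2]
    _ = (∑ k : Fin 3, ∑ j : Fin 3, a k * p j * pd j (fun y => H y k) x)
        + (1 / 2) * ∑ l : Fin 3, H x l *
            (∑ j : Fin 3, p j * (∑ m : Fin 3, p m *
              (pd j (fun y => (G y)⁻¹ m l) x + pd l (fun y => (G y)⁻¹ m j) x
                - pd m (fun y => (G y)⁻¹ j l) x))) := by
        simp only [Fin.sum_univ_three]
        ring
    _ = (∑ k : Fin 3, ∑ j : Fin 3, a k * p j * pd j (fun y => H y k) x)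
        + (1 / 2) * ∑ l : Fin 3, H x l *
            (-∑ c : Fin 3, ∑ b : Fin 3, a c * pd l (fun y => G y c b) x * a b) := by
        congr 1
        rw [Finset.mul_sum, Finset.mul_sum]
        refine Finset.sum_congr rfl fun l _ => ?_
        rw [step4 l]
    _ = (∑ k : Fin 3, ∑ j : Fin 3, a k * p j * pd j (fun y => H y k) x)
        - (1 / 2) * ∑ l : Fin 3, ∑ c : Fin 3, ∑ b : Fin 3,
            H x l * (a c * pd l (fun y => G y c b) x * a b) := by
        simp only [Fin.sum_univ_three]
        ring

/-- First geometric multiplier identity: for a smooth solution of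
`û_tt = div(G∇û) + f` and a smooth vector field `Ĥ`,
`div{2Ĥ(û) G∇û - (|∇_g û|_g² - û_t²)Ĥ} + 2f Ĥ(û)
  = 2∂_t[û_t Ĥ(û)] + 2DĤ(∇_g û, ∇_g û) + (û_t² - |∇_g û|_g²) div Ĥ`. -/
theorem first_multiplier_identity
    (G : E3 → Matrix (Fin 3) (Fin 3) ℝ)
    (hGsmooth : ∀ i j : Fin 3, ContDiff ℝ (⊤ : ℕ∞) (fun x => G x i j))
    (hGsymm : ∀ x, (G x).IsSymm) (hGpos : ∀ x, (G x).PosDef)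
    (u f : E3 → ℝ → ℝ) (H : E3 → E3)
    (hu : ContDiff ℝ (⊤ : ℕ∞) (fun z : E3 × ℝ => u z.1 z.2))
    (hf : ContDiff ℝ (⊤ : ℕ∞) (fun z : E3 × ℝ => f z.1 z.2))
    (hH : ∀ k : Fin 3, ContDiff ℝ (⊤ : ℕ∞) (fun x => H x k))
    (hwave : ∀ x t,
      deriv (fun s => deriv (fun r => u x r) s) t =
        divV (fun y => (G y).mulVec (grad (fun z => u z t) y)) x + f x t) :
    ∀ x t,
      divV (fun y =>
          (2 * (H y ⬝ᵥ grad (fun z => u z t) y)) •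
              (G y).mulVec (grad (fun z => u z t) y)
          - ((G y).mulVec (grad (fun z => u z t) y) ⬝ᵥ grad (fun z => u z t) y
              - (deriv (fun r => u y r) t) ^ 2) • H y) x
        + 2 * f x t * (H x ⬝ᵥ grad (fun z => u z t) x)
      = 2 * deriv (fun s =>
            deriv (fun r => u x r) s * (H x ⬝ᵥ grad (fun z => u z s) x)) t
        + 2 * covDiff G H x ((G x).mulVec (grad (fun z => u z t) x))
            ((G x).mulVec (grad (fun z => u z t) x))
        + ((deriv (fun r => u x r) t) ^ 2
            - (G x).mulVec (grad (fun z => u z t) x) ⬝ᵥ grad (fun z => u z t) x)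
          * divV H x := by
  intro x t
  have hUd : Differentiable ℝ (fun z : E3 × ℝ => u z.1 z.2) := hu.differentiable (by simp)
  set AA : Fin 3 → E3 × ℝ → ℝ :=
    fun k z => fderiv ℝ (fun z : E3 × ℝ => u z.1 z.2) z (Pi.single k 1, 0) with hAA
  set UT : E3 × ℝ → ℝ :=
    fun z => fderiv ℝ (fun z : E3 × ℝ => u z.1 z.2) z (0, 1) with hUT
  have hA : ∀ (s : ℝ) (k : Fin 3) (y : E3), pd k (fun z => u z s) y = AA k (y, s) := by
    intro s k y
    rw [pd, hAA]
    exact fderiv_fix_snd (F := fun z : E3 × ℝ => u z.1 z.2) (hUd _) _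
  have hut : ∀ (s : ℝ) (y : E3), deriv (fun r => u y r) s = UT (y, s) := by
    intro s y
    rw [hUT]
    exact fderiv_fix_fst (F := fun z : E3 × ℝ => u z.1 z.2) (hUd _)
  simp only [divV, grad, Matrix.mulVec, dotProduct, Pi.sub_apply, Pi.smul_apply,
    smul_eq_mul, hA, hut]
  -- slice smoothness
  have hAAsm : ∀ k, ContDiff ℝ (⊤ : ℕ∞) (AA k) := fun k => contDiff_fderiv_apply hu _
  have hUTsm : ContDiff ℝ (⊤ : ℕ∞) UT := contDiff_fderiv_apply hu _
  have dA : ∀ (k : Fin 3) (y : E3), DifferentiableAt ℝ (fun y => AA k (y, t)) y :=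
    fun k y => (((hAAsm k).comp (contDiff_id.prodMk contDiff_const)).differentiable (by simp)) y
  have dUT : ∀ y : E3, DifferentiableAt ℝ (fun y => UT (y, t)) y :=
    fun y => ((hUTsm.comp (contDiff_id.prodMk contDiff_const)).differentiable (by simp)) y
  have dH : ∀ (k : Fin 3) (y : E3), DifferentiableAt ℝ (fun y => H y k) y :=
    fun k y => ((hH k).differentiable (by simp)) y
  have dG : ∀ (a b : Fin 3) (y : E3), DifferentiableAt ℝ (fun y => G y a b) y :=
    fun a b y => ((hGsmooth a b).differentiable (by simp)) y
  have dAs : ∀ k : Fin 3, DifferentiableAt ℝ (fun s => AA k (x, s)) t :=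
    fun k => (((hAAsm k).comp (contDiff_const.prodMk contDiff_id)).differentiable (by simp)) t
  have dUs : DifferentiableAt ℝ (fun s => UT (x, s)) t :=
    ((hUTsm.comp (contDiff_const.prodMk contDiff_id)).differentiable (by simp)) t
  -- derivative facts
  have F1 : ∀ i k : Fin 3, pd i (fun y => AA k (y, t)) x
      = fderiv ℝ (AA k) (x, t) (Pi.single i 1, 0) := by
    intro i k
    rw [pd]
    exact fderiv_fix_snd (F := AA k) (((hAAsm k).differentiable (by simp)) _) _
  have F2 : ∀ i k : Fin 3, fderiv ℝ (AA k) (x, t) (Pi.single i 1, 0)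
      = fderiv ℝ (AA i) (x, t) (Pi.single k 1, 0) := by
    intro i k
    exact schwarz hu (x, t) (Pi.single i 1, 0) (Pi.single k 1, 0)
  have F3 : ∀ i : Fin 3, pd i (fun y => UT (y, t)) x
      = fderiv ℝ UT (x, t) (Pi.single i 1, 0) := by
    intro i
    rw [pd]
    exact fderiv_fix_snd (F := UT) ((hUTsm.differentiable (by simp)) _) _
  have F4 : ∀ k : Fin 3, deriv (fun s => AA k (x, s)) t
      = fderiv ℝ UT (x, t) (Pi.single k 1, 0) := by
    intro k
    calc deriv (fun s => AA k (x, s)) t = fderiv ℝ (AA k) (x, t) (0, 1) :=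
          fderiv_fix_fst (((hAAsm k).differentiable (by simp)) _)
      _ = fderiv ℝ UT (x, t) (Pi.single k 1, 0) :=
          schwarz hu (x, t) (0, 1) (Pi.single k 1, 0)
  have F5 : deriv (fun s => UT (x, s)) t = fderiv ℝ UT (x, t) (0, 1) :=
    fderiv_fix_fst ((hUTsm.differentiable (by simp)) _)
  -- pd computations
  have pdHu : ∀ i : Fin 3, pd i (fun y => ∑ k : Fin 3, H y k * AA k (y, t)) x
      = ∑ k : Fin 3, (pd i (fun y => H y k) x * AA k (x, t)
          + H x k * fderiv ℝ (AA k) (x, t) (Pi.single i 1, 0)) := by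
    intro i
    rw [pd_sum i (fun k _ => (dH k x).fun_mul (dA k x))]
    exact Finset.sum_congr rfl fun k _ => by rw [pd_mul i (dH k x) (dA k x), F1]
  have pdPv : ∀ i j : Fin 3, pd i (fun y => ∑ m : Fin 3, G y j m * AA m (y, t)) x
      = ∑ m : Fin 3, (pd i (fun y => G y j m) x * AA m (x, t)
          + G x j m * fderiv ℝ (AA m) (x, t) (Pi.single i 1, 0)) := by
    intro i j
    rw [pd_sum i (fun m _ => (dG j m x).fun_mul (dA m x))]
    exact Finset.sum_congr rfl fun m _ => by rw [pd_mul i (dG j m x) (dA m x), F1]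
  have dPv : ∀ (j : Fin 3) (y : E3),
      DifferentiableAt ℝ (fun y => ∑ m : Fin 3, G y j m * AA m (y, t)) y :=
    fun j y => DifferentiableAt.fun_sum (fun m _ => (dG j m y).mul (dA m y))
  have dEv : DifferentiableAt ℝ
      (fun y => ∑ j : Fin 3, (∑ m : Fin 3, G y j m * AA m (y, t)) * AA j (y, t)) x :=
    DifferentiableAt.fun_sum (fun j _ => (dPv j x).mul (dA j x))
  have pdEv : ∀ i : Fin 3, pd i
      (fun y => ∑ j : Fin 3, (∑ m : Fin 3, G y j m * AA m (y, t)) * AA j (y, t)) x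
      = ∑ j : Fin 3, ((∑ m : Fin 3, (pd i (fun y => G y j m) x * AA m (x, t)
            + G x j m * fderiv ℝ (AA m) (x, t) (Pi.single i 1, 0))) * AA j (x, t)
          + (∑ m : Fin 3, G x j m * AA m (x, t))
            * fderiv ℝ (AA j) (x, t) (Pi.single i 1, 0)) := by
    intro i
    rw [pd_sum i (fun j _ => (dPv j x).fun_mul (dA j x))]
    exact Finset.sum_congr rfl fun j _ => by
      rw [pd_mul i (dPv j x) (dA j x), pdPv, F1]
  have dHu : ∀ y : E3, DifferentiableAt ℝ (fun y => ∑ k : Fin 3, H y k * AA k (y, t)) y :=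
    fun y => DifferentiableAt.fun_sum (fun k _ => (dH k y).mul (dA k y))
  have main_pd : ∀ i : Fin 3, pd i (fun y =>
      (2 * ∑ k : Fin 3, H y k * AA k (y, t)) * ∑ m : Fin 3, G y i m * AA m (y, t)
      - ((∑ j : Fin 3, (∑ m : Fin 3, G y j m * AA m (y, t)) * AA j (y, t))
          - UT (y, t) ^ 2) * H y i) x
    = (2 * ∑ k : Fin 3, (pd i (fun y => H y k) x * AA k (x, t)
          + H x k * fderiv ℝ (AA k) (x, t) (Pi.single i 1, 0)))
        * (∑ m : Fin 3, G x i m * AA m (x, t))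
      + (2 * ∑ k : Fin 3, H x k * AA k (x, t))
        * (∑ m : Fin 3, (pd i (fun y => G y i m) x * AA m (x, t)
            + G x i m * fderiv ℝ (AA m) (x, t) (Pi.single i 1, 0)))
      - (((∑ j : Fin 3, ((∑ m : Fin 3, (pd i (fun y => G y j m) x * AA m (x, t)
              + G x j m * fderiv ℝ (AA m) (x, t) (Pi.single i 1, 0))) * AA j (x, t)
            + (∑ m : Fin 3, G x j m * AA m (x, t))
              * fderiv ℝ (AA j) (x, t) (Pi.single i 1, 0)))
          - 2 * UT (x, t) * fderiv ℝ UT (x, t) (Pi.single i 1, 0)) * H x i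
        + ((∑ j : Fin 3, (∑ m : Fin 3, G x j m * AA m (x, t)) * AA j (x, t))
            - UT (x, t) ^ 2) * pd i (fun y => H y i) x) := by
    intro i
    have d1 : DifferentiableAt ℝ (fun y => 2 * ∑ k : Fin 3, H y k * AA k (y, t)) x :=
      (dHu x).const_mul 2
    have d3 : DifferentiableAt ℝ
        (fun y => (∑ j : Fin 3, (∑ m : Fin 3, G y j m * AA m (y, t)) * AA j (y, t))
          - UT (y, t) ^ 2) x := dEv.sub ((dUT x).pow 2)
    rw [pd_sub i (d1.fun_mul (dPv i x)) (d3.fun_mul (dH i x)),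
      pd_mul i d1 (dPv i x), pd_const_mul i 2 (dHu x),
      pd_mul i d3 (dH i x), pd_sub i dEv ((dUT x).fun_pow 2), pd_sq i (dUT x),
      pdHu, pdPv, pdEv, F3]
  have gl : (∑ i : Fin 3, pd i (fun y =>
      (2 * ∑ k : Fin 3, H y k * AA k (y, t)) * ∑ m : Fin 3, G y i m * AA m (y, t)
      - ((∑ j : Fin 3, (∑ m : Fin 3, G y j m * AA m (y, t)) * AA j (y, t))
          - UT (y, t) ^ 2) * H y i) x)
    = ∑ i : Fin 3,
      ((2 * ∑ k : Fin 3, (pd i (fun y => H y k) x * AA k (x, t)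
          + H x k * fderiv ℝ (AA k) (x, t) (Pi.single i 1, 0)))
        * (∑ m : Fin 3, G x i m * AA m (x, t))
      + (2 * ∑ k : Fin 3, H x k * AA k (x, t))
        * (∑ m : Fin 3, (pd i (fun y => G y i m) x * AA m (x, t)
            + G x i m * fderiv ℝ (AA m) (x, t) (Pi.single i 1, 0)))
      - (((∑ j : Fin 3, ((∑ m : Fin 3, (pd i (fun y => G y j m) x * AA m (x, t)
              + G x j m * fderiv ℝ (AA m) (x, t) (Pi.single i 1, 0))) * AA j (x, t)
            + (∑ m : Fin 3, G x j m * AA m (x, t))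
              * fderiv ℝ (AA j) (x, t) (Pi.single i 1, 0)))
          - 2 * UT (x, t) * fderiv ℝ UT (x, t) (Pi.single i 1, 0)) * H x i
        + ((∑ j : Fin 3, (∑ m : Fin 3, G x j m * AA m (x, t)) * AA j (x, t))
            - UT (x, t) ^ 2) * pd i (fun y => H y i) x)) :=
    Finset.sum_congr rfl fun i _ => main_pd i
  -- wave equation in atomic form
  have hw0 := hwave x t
  simp only [divV, grad, Matrix.mulVec, dotProduct, hA, hut] at hw0
  rw [F5] at hw0
  rw [show (∑ i : Fin 3, pd i (fun y => ∑ m : Fin 3, G y i m * AA m (y, t)) x)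
      = ∑ i : Fin 3, ∑ m : Fin 3, (pd i (fun y => G y i m) x * AA m (x, t)
          + G x i m * fderiv ℝ (AA m) (x, t) (Pi.single i 1, 0)) from
    Finset.sum_congr rfl fun i _ => pdPv i i] at hw0
  -- time derivative term
  have hderiv : deriv (fun s => UT (x, s) * ∑ k : Fin 3, H x k * AA k (x, s)) t
      = fderiv ℝ UT (x, t) (0, 1) * (∑ k : Fin 3, H x k * AA k (x, t))
        + UT (x, t) * ∑ k : Fin 3, H x k * fderiv ℝ UT (x, t) (Pi.single k 1, 0) := by
    rw [deriv_fun_mul dUs (DifferentiableAt.fun_sum fun k _ => (dAs k).const_mul (H x k)), F5]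
    congr 1
    congr 1
    rw [deriv_fun_sum (fun k _ => (dAs k).const_mul (H x k))]
    exact Finset.sum_congr rfl fun k _ => by rw [deriv_const_mul (H x k) (dAs k), F4]
  have hcov := covDiff_eq G hGsmooth hGsymm hGpos H x (grad (fun z => u z t) x)
  rw [gl, hderiv, hcov]
  simp only [grad, Matrix.mulVec, dotProduct, hA]
  simp only [Fin.sum_univ_three] at hw0 ⊢
  simp only [F2 1 0, F2 2 0, F2 2 1,
    show G x 1 0 = G x 0 1 from (hGsymm x).apply 0 1,
    show G x 2 0 = G x 0 2 from (hGsymm x).apply 0 2,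
    show G x 2 1 = G x 1 2 from (hGsymm x).apply 1 2] at hw0 ⊢
  linear_combination (-(2 * (H x 0 * AA 0 (x, t) + H x 1 * AA 1 (x, t)
    + H x 2 * AA 2 (x, t)))) * hw0
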